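/- arXiv:2002.09186 — 3 statements merged into one kernel-verified Lean document; each statement's English description precedes it below -/
import Mathlib

section
/- Every set of (r-1)(d+1)+1 points in R^d can be partitioned into r nonempty pairwise disjoint subsets whose convex hulls have a common point. -/
/-!
Sarkaria's proof via Bárány's colourful Carathéodory theorem.

Colourful Carathéodory: among all colourful selections take one whose convex hull comes closest
to `0`, with nearest point `p`. If `p ≠ 0`, Carathéodory writes `p` as a positive combination of
affinely independent selected points, which all lie on the hyperplane `⟪p, x⟫ = ‖p‖²` inside the
ambient subspace; there are at most `dim` of them, so some colour is unused. Swapping in a point of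
that colour with `⟪p, x⟫ ≤ 0`, which exists because its class has `0` in its hull, keeps `p` in the
hull and brings the hull strictly closer to `0`.

Tverberg: write `âᵢ = (aᵢ, 1)` and colour `i` by the `r` vectors `(e_c - 𝟙/r) ⊗ âᵢ`, which have
barycentre `0` and lie in the `(r - 1)(d + 1)`-dimensional space of `r × (d + 1)` matrices with
zero column sums. A colourful choice `k` with `0 = ∑ wᵢ (e_{k i} - 𝟙/r) ⊗ âᵢ` says exactly that
`∑_{k i = c} wᵢ âᵢ = (1/r) ∑ wᵢ âᵢ` for every `c`: all classes have mass `1/r` and the common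
barycentre `∑ wᵢ aᵢ`.
-/

open scoped Classical
open Finset Module RealInnerProductSpace

section Convexity

variable {R E ι : Type*} [Field R] [LinearOrder R] [IsStrictOrderedRing R] [AddCommGroup E]
  [Module R E] [Fintype ι]

lemma exists_weights_of_mem_convexHull_range {v : ι → E} {x : E}
    (hx : x ∈ convexHull R (Set.range v)) :
    ∃ w : ι → R, (∀ i, 0 ≤ w i) ∧ ∑ i, w i = 1 ∧ ∑ i, w i • v i = x := by
  rw [convexHull_range_eq_exists_affineCombination] at hx
  obtain ⟨s, w, hw₀, hw₁, rfl⟩ := hx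
  refine ⟨fun i => if i ∈ s then w i else 0, fun i => ?_, ?_, ?_⟩
  · dsimp only
    split_ifs with hi
    exacts [hw₀ i hi, le_rfl]
  · simpa [Finset.sum_ite_mem] using hw₁
  · simp [ite_smul, Finset.sum_ite_mem, s.affineCombination_eq_linear_combination v w hw₁]

end Convexity

section ColorfulCaratheodory

variable {E : Type*} [NormedAddCommGroup E] [InnerProductSpace ℝ E]

lemma exists_mem_inner_nonpos_of_zero_mem_convexHull {s : Set E}
    (hs : (0 : E) ∈ convexHull ℝ s) (p : E) : ∃ y ∈ s, ⟪p, y⟫ ≤ 0 := by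
  by_contra! h
  have hconv : Convex ℝ {y : E | 0 < ⟪p, y⟫} := convex_halfSpace_gt (innerₗ E p).isLinear 0
  simpa using convexHull_min (show s ⊆ {y : E | 0 < ⟪p, y⟫} from h) hconv hs

lemma IsMinOn.real_inner_self_le {K : Set E} {p : E} (hmin : IsMinOn (‖·‖) K p) (hK : Convex ℝ K)
    (hp : p ∈ K) {w : E} (hw : w ∈ K) : ⟪p, p⟫ ≤ ⟪p, w⟫ := by
  have : Nonempty K := ⟨⟨p, hp⟩⟩
  have hinf : ‖(0 : E) - p‖ = ⨅ w : K, ‖(0 : E) - w‖ :=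
    le_antisymm (le_ciInf fun w => by simpa using isMinOn_iff.mp hmin w w.2)
      (ciInf_le ⟨0, Set.forall_mem_range.mpr fun _ => norm_nonneg _⟩ (⟨p, hp⟩ : K))
  have := (norm_eq_iInf_iff_real_inner_le_zero hK hp).mp hinf w hw
  rw [zero_sub, inner_neg_left, inner_sub_right] at this
  linarith

lemma inner_eq_of_sum_smul_eq_of_forall_le {κ : Type*} [Fintype κ] {w : κ → ℝ} {z : κ → E}
    {p : E} (hw₀ : ∀ t, 0 < w t) (hw₁ : ∑ t, w t = 1) (hzw : ∑ t, w t • z t = p)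
    (hle : ∀ t, ⟪p, p⟫ ≤ ⟪p, z t⟫) (t : κ) : ⟪p, z t⟫ = ⟪p, p⟫ := by
  have hle' : ∀ t ∈ univ, w t * ⟪p, p⟫ ≤ w t * ⟪p, z t⟫ := fun t _ =>
    mul_le_mul_of_nonneg_left (hle t) (hw₀ t).le
  have hsum : ∑ t, w t * ⟪p, p⟫ = ∑ t, w t * ⟪p, z t⟫ := by
    rw [← Finset.sum_mul, hw₁, one_mul, ← hzw, inner_sum]
    simp only [real_inner_smul_right]
  exact (mul_left_cancel₀ (hw₀ t).ne' ((sum_eq_sum_iff_of_le hle').mp hsum t (mem_univ t))).symm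

variable [FiniteDimensional ℝ E]

lemma card_le_finrank_of_affineIndependent_of_inner_eq {ι : Type*} [Fintype ι]
    {V : Submodule ℝ E} {z : ι → E} (hz : AffineIndependent ℝ z) (hzV : ∀ i, z i ∈ V)
    {p : E} (hpV : p ∈ V) (hp : p ≠ 0) {c : ℝ} (hzp : ∀ i, ⟪p, z i⟫ = c) :
    Fintype.card ι ≤ finrank ℝ V := by
  have hspan : vectorSpan ℝ (Set.range z) ≤ V ⊓ (ℝ ∙ p)ᗮ := by
    rw [vectorSpan_def, Submodule.span_le]
    rintro _ ⟨_, ⟨i, rfl⟩, _, ⟨j, rfl⟩, rfl⟩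
    refine ⟨V.sub_mem (hzV i) (hzV j), ?_⟩
    simp only [SetLike.mem_coe, Submodule.mem_orthogonal_singleton_iff_inner_right, vsub_eq_sub,
      inner_sub_right, hzp, sub_self]
  have hlt : V ⊓ (ℝ ∙ p)ᗮ < V := by
    refine inf_lt_left.mpr fun hV => hp ?_
    exact inner_self_eq_zero.mp (Submodule.mem_orthogonal_singleton_iff_inner_right.mp (hV hpV))
  calc Fintype.card ι ≤ finrank ℝ (vectorSpan ℝ (Set.range z)) + 1 := hz.card_le_finrank_succ
    _ ≤ finrank ℝ ↥(V ⊓ (ℝ ∙ p)ᗮ) + 1 := by gcongr; exact Submodule.finrank_mono hspan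
    _ ≤ finrank ℝ V := Submodule.finrank_lt_finrank_of_lt hlt

lemma exists_mem_convexHull_image_compl_singleton {ι : Type*} [Fintype ι] {V : Submodule ℝ E}
    {y : ι → E} (hyV : ∀ i, y i ∈ V) (hcard : finrank ℝ V < Fintype.card ι) {p : E} (hp : p ≠ 0)
    (hpy : p ∈ convexHull ℝ (Set.range y)) (hle : ∀ i, ⟪p, p⟫ ≤ ⟪p, y i⟫) :
    ∃ i₀, p ∈ convexHull ℝ (y '' {i₀}ᶜ) := by
  obtain ⟨κ, _, z, w, hzy, hz, hw₀, hw₁, hzw⟩ := eq_pos_convex_span_of_mem_convexHull hpy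
  choose g hg using fun t => hzy ⟨t, rfl⟩
  have hzp := inner_eq_of_sum_smul_eq_of_forall_le hw₀ hw₁ hzw fun t => hg t ▸ hle (g t)
  have hpV : p ∈ V := convexHull_min (Set.range_subset_iff.mpr hyV) V.convex hpy
  have hκ := card_le_finrank_of_affineIndependent_of_inner_eq hz (fun t => hg t ▸ hyV (g t)) hpV
    hp hzp
  obtain ⟨i₀, hi₀⟩ : ∃ i₀, i₀ ∉ Set.range g := by
    by_contra! hsurj
    have := Fintype.card_le_of_surjective g hsurj
    omega
  exact ⟨i₀, mem_convexHull_of_exists_fintype w z (fun t => (hw₀ t).le) hw₁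
    (fun t => ⟨g t, fun h => hi₀ ⟨t, h⟩, hg t⟩) hzw⟩

theorem exists_colorful_zero_mem_convexHull {ι : Type*} [Fintype ι] (V : Submodule ℝ E)
    (C : ι → Finset E) (hCV : ∀ i, ↑(C i) ⊆ (V : Set E))
    (hC : ∀ i, (0 : E) ∈ convexHull ℝ (C i : Set E)) (hcard : finrank ℝ V < Fintype.card ι) :
    ∃ y : ι → E, (∀ i, y i ∈ C i) ∧ (0 : E) ∈ convexHull ℝ (Set.range y) := by
  have hne : ∀ i, (C i).Nonempty := fun i =>
    Finset.coe_nonempty.mp (convexHull_nonempty_iff.mp ⟨0, hC i⟩)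
  obtain ⟨y, hy, hmin⟩ := (Fintype.piFinset C).exists_min_image
    (fun y => Metric.infDist 0 (convexHull ℝ (Set.range y))) (Fintype.piFinset_nonempty.mpr hne)
  refine ⟨y, Fintype.mem_piFinset.mp hy, ?_⟩
  have : Nonempty ι := Fintype.card_pos_iff.mp (Nat.zero_lt_of_lt hcard)
  obtain ⟨p, hpK, hpdist⟩ := ((Set.finite_range y).isCompact_convexHull ℝ).exists_infDist_eq_dist
    ((Set.range_nonempty y).convexHull) 0
  by_cases hp0 : p = 0
  · exact hp0 ▸ hpK
  exfalso
  have hnear : ∀ y' ∈ Fintype.piFinset C, p ∈ convexHull ℝ (Set.range y') →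
      ∀ x ∈ convexHull ℝ (Set.range y'), ⟪p, p⟫ ≤ ⟪p, x⟫ := by
    intro y' hy' hp' x hx
    refine IsMinOn.real_inner_self_le (isMinOn_iff.mpr fun x hx => ?_) (convex_convexHull ℝ _)
      hp' hx
    calc ‖p‖ = Metric.infDist 0 (convexHull ℝ (Set.range y)) := by rw [hpdist, dist_zero_left]
      _ ≤ Metric.infDist 0 (convexHull ℝ (Set.range y')) := hmin y' hy'
      _ ≤ ‖x‖ := by simpa using Metric.infDist_le_dist_of_mem (x := 0) hx
  obtain ⟨i₀, hpi₀⟩ := exists_mem_convexHull_image_compl_singleton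
    (fun i => hCV i (Fintype.mem_piFinset.mp hy i)) hcard hp0 hpK
    (fun i => hnear y hy hpK _ (subset_convexHull ℝ _ ⟨i, rfl⟩))
  obtain ⟨x, hxC, hxp⟩ := exists_mem_inner_nonpos_of_zero_mem_convexHull (hC i₀) p
  have hy' : Function.update y i₀ x ∈ Fintype.piFinset C := by
    rw [Fintype.mem_piFinset]
    intro i
    rcases eq_or_ne i i₀ with rfl | hi
    · simpa using hxC
    · simpa [hi] using Fintype.mem_piFinset.mp hy i
  have hpK' : p ∈ convexHull ℝ (Set.range (Function.update y i₀ x)) := by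
    refine convexHull_mono ?_ hpi₀
    rintro _ ⟨i, hi, rfl⟩
    exact ⟨i, Function.update_of_ne hi x y⟩
  have := hnear _ hy' hpK' x (subset_convexHull ℝ _ ⟨i₀, Function.update_self ..⟩)
  linarith [real_inner_self_pos.mpr hp0]

end ColorfulCaratheodory

section Sarkaria

variable {κ : Type*} {r : ℕ}

noncomputable def sarkariaVector (r : ℕ) (v : κ → ℝ) (c : Fin r) : EuclideanSpace ℝ (Fin r × κ) :=
  WithLp.toLp 2 fun q => ((if q.1 = c then 1 else 0) - (r : ℝ)⁻¹) * v q.2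

def sumFst (r : ℕ) (κ : Type*) : EuclideanSpace ℝ (Fin r × κ) →ₗ[ℝ] κ → ℝ where
  toFun M j := ∑ c, M (c, j)
  map_add' M N := by ext j; simp [Finset.sum_add_distrib]
  map_smul' a M := by ext j; simp [Finset.mul_sum]

lemma sumFst_sarkariaVector (hr : r ≠ 0) (v : κ → ℝ) (c : Fin r) :
    sumFst r κ (sarkariaVector r v c) = 0 := by
  ext j
  simp [sumFst, sarkariaVector, ← Finset.sum_mul, Finset.sum_sub_distrib, hr]

lemma sum_sarkariaVector (hr : r ≠ 0) (v : κ → ℝ) : ∑ c, sarkariaVector r v c = 0 := by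
  ext q
  simp [sarkariaVector, ← Finset.sum_mul, Finset.sum_sub_distrib, hr]

lemma finrank_ker_sumFst [Fintype κ] (hr : 0 < r) :
    finrank ℝ (LinearMap.ker (sumFst r κ)) = (r - 1) * Fintype.card κ := by
  have hsurj : LinearMap.range (sumFst r κ) = ⊤ := by
    refine LinearMap.range_eq_top.mpr fun f =>
      ⟨WithLp.toLp 2 fun q => if q.1 = ⟨0, hr⟩ then f q.2 else 0, ?_⟩
    ext j
    simp [sumFst]
  have := LinearMap.finrank_range_add_finrank_ker (sumFst r κ)
  rw [hsurj, finrank_top, finrank_fintype_fun_eq_card, finrank_euclideanSpace, Fintype.card_prod,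
    Fintype.card_fin] at this
  rw [Nat.sub_one_mul]
  omega

variable {ι : Type*} [Fintype ι]

lemma sum_smul_sarkariaVector_apply (w : ι → ℝ) (v : ι → κ → ℝ) (k : ι → Fin r) (c : Fin r)
    (j : κ) : (∑ i, w i • sarkariaVector r (v i) (k i)) (c, j) =
      ∑ i with k i = c, w i * v i j - (r : ℝ)⁻¹ * ∑ i, w i * v i j := by
  simp only [sarkariaVector, WithLp.ofLp_sum, WithLp.ofLp_smul, Finset.sum_apply, Pi.smul_apply,
    smul_eq_mul, sum_filter, mul_sum, ← sum_sub_distrib]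
  refine Finset.sum_congr rfl fun i _ => ?_
  rcases eq_or_ne (k i) c with rfl | h
  · simp only [if_pos]; ring
  · simp [h, h.symm]; ring

lemma sum_fiber_eq_of_sum_smul_sarkariaVector_eq_zero {w : ι → ℝ} {v : ι → κ → ℝ}
    {k : ι → Fin r} (h : ∑ i, w i • sarkariaVector r (v i) (k i) = 0) (c : Fin r) :
    ∑ i with k i = c, w i • v i = (r : ℝ)⁻¹ • ∑ i, w i • v i := by
  ext j
  have hcoord := sum_smul_sarkariaVector_apply w v k c j
  rw [h, PiLp.zero_apply] at hcoord
  simp only [Finset.sum_apply, Pi.smul_apply, smul_eq_mul]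
  linarith

end Sarkaria

theorem exists_tverberg_partition {ι κ : Type*} [Fintype ι] [Fintype κ] {r : ℕ} (hr : 0 < r)
    (a : ι → EuclideanSpace ℝ κ) (hcard : (r - 1) * (Fintype.card κ + 1) < Fintype.card ι) :
    ∃ (k : ι → Fin r) (p : EuclideanSpace ℝ κ),
      ∀ c, (∃ i, k i = c) ∧ p ∈ convexHull ℝ (a '' {i | k i = c}) := by
  let v : ι → Option κ → ℝ := fun i o => o.elim 1 (a i)
  obtain ⟨y, hyC, hy0⟩ := exists_colorful_zero_mem_convexHull (LinearMap.ker (sumFst r (Option κ)))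
    (fun i => univ.image (sarkariaVector r (v i)))
    (fun i x hx => by
      obtain ⟨c, -, rfl⟩ := Finset.mem_image.mp hx
      exact sumFst_sarkariaVector hr.ne' _ c)
    (fun i => by
      have h := univ.centerMass_mem_convexHull (w := fun _ => (1 : ℝ))
        (z := sarkariaVector r (v i)) (fun _ _ => zero_le_one) (by simpa using hr)
        (fun c _ => Finset.mem_image_of_mem _ (mem_univ c))
      simpa only [Finset.centerMass, one_smul, sum_sarkariaVector hr.ne', smul_zero] using h)
    (by rwa [finrank_ker_sumFst hr, Fintype.card_option])
  choose k hk using fun i => Finset.mem_image.mp (hyC i)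
  obtain ⟨w, hw₀, hw₁, hwy⟩ := exists_weights_of_mem_convexHull_range hy0
  have hfib := sum_fiber_eq_of_sum_smul_sarkariaVector_eq_zero (w := w) (v := v) (k := k)
    (by simpa only [(hk _).2] using hwy)
  refine ⟨k, ∑ i, w i • a i, fun c => ?_⟩
  have hmass : ∑ i with k i = c, w i = (r : ℝ)⁻¹ := by
    simpa [v, hw₁] using congr_fun (hfib c) none
  have hpoint : ∑ i with k i = c, w i • a i = (r : ℝ)⁻¹ • ∑ i, w i • a i := by
    ext j
    simpa [v] using congr_fun (hfib c) (some j)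
  have hpos : 0 < ∑ i with k i = c, w i := by rw [hmass]; positivity
  refine ⟨?_, ?_⟩
  · obtain ⟨i, hi⟩ := Finset.nonempty_of_sum_ne_zero hpos.ne'
    exact ⟨i, (Finset.mem_filter.mp hi).2⟩
  · have h := (univ.filter (k · = c)).centerMass_mem_convexHull (s := a '' {i | k i = c}) (z := a)
      (fun i _ => hw₀ i) hpos (fun i hi => ⟨i, (Finset.mem_filter.mp hi).2, rfl⟩)
    rwa [Finset.centerMass, hmass, hpoint, smul_smul, inv_inv, mul_inv_cancel₀ (by positivity),
      one_smul] at h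

theorem tverberg_general (r d : ℕ) (hr : 2 ≤ r)
    (S : Finset (EuclideanSpace ℝ (Fin d)))
    (hcard : S.card = (r - 1) * (d + 1) + 1) :
    ∃ P : Fin r → Finset (EuclideanSpace ℝ (Fin d)),
      (∀ i, P i ⊆ S) ∧
      (∀ i, (P i).Nonempty) ∧
      (∀ i j, i ≠ j → Disjoint (P i) (P j)) ∧
      (S = Finset.univ.biUnion P) ∧
      (∃ p : EuclideanSpace ℝ (Fin d),
        ∀ i, p ∈ convexHull ℝ (P i : Set (EuclideanSpace ℝ (Fin d)))) := by
  obtain ⟨k, p, hk⟩ := exists_tverberg_partition (by omega : 0 < r)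
    (Subtype.val : S → EuclideanSpace ℝ (Fin d)) (by simp [hcard])
  refine ⟨fun c => (univ.filter (k · = c)).map (Function.Embedding.subtype _), ?_, ?_, ?_, ?_,
    p, fun c => ?_⟩
  · intro c x hx
    simp only [mem_map, mem_filter, Function.Embedding.coe_subtype] at hx
    obtain ⟨i, -, rfl⟩ := hx
    exact i.2
  · intro c
    obtain ⟨i, hi⟩ := (hk c).1
    exact ⟨i, mem_map_of_mem _ (by simpa using hi)⟩
  · intro c c' hcc'
    simp only [disjoint_left, mem_map, mem_filter, Function.Embedding.coe_subtype]
    rintro _ ⟨i, ⟨-, rfl⟩, rfl⟩ ⟨i', ⟨-, rfl⟩, hii'⟩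
    exact hcc' (congrArg k (Subtype.ext hii')).symm
  · ext x
    simp
  · have hP : (((univ.filter (k · = c)).map (Function.Embedding.subtype _) : Finset _) : Set _) =
        Subtype.val '' {i | k i = c} := by
      ext x
      simp
    exact hP ▸ (hk c).2

/-- **Tverberg's theorem.** Every set of `(r-1)(d+1)+1` points in `ℝ^d` can be
partitioned into `r` nonempty pairwise disjoint subsets whose convex hulls have a
common point. -/
theorem tverberg (r d : ℕ) (hr : 2 ≤ r) (hd : 1 ≤ d)
    (S : Finset (EuclideanSpace ℝ (Fin d)))
    (hcard : S.card = (r - 1) * (d + 1) + 1) :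
    ∃ P : Fin r → Finset (EuclideanSpace ℝ (Fin d)),
      (∀ i, P i ⊆ S) ∧
      (∀ i, (P i).Nonempty) ∧
      (∀ i j, i ≠ j → Disjoint (P i) (P j)) ∧
      (S = Finset.univ.biUnion P) ∧
      (∃ p : EuclideanSpace ℝ (Fin d),
        ∀ i, p ∈ convexHull ℝ (P i : Set (EuclideanSpace ℝ (Fin d)))) :=
  tverberg_general r d hr S hcard
end

section
/- The multiple chessboard complex Δ_{2,4}^{1;L} on the 2×4 chessboard, consisting of rook placements where each row contains at most one rook, the second column at most one rook, and the first column at most two rooks, is isomorphic as a simplicial complex to the Bier sphere Bier(K) of the 1-skeleton K of the tetrahedron on 4 vertices. -/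
open scoped Classical

/-- The multiple chessboard complex `Δ_{2,4}^{𝟙;𝕃}`: a set of cells of the `2 × 4`
board (first coordinate = column, second coordinate = row) is a simplex iff each of
the four rows contains at most one cell, column `1` (the second column) contains at
most one cell, and column `0` (the first column) contains at most two cells. -/
def IsChessSimplex (S : Finset (Fin 2 × Fin 4)) : Prop :=
  (∀ j : Fin 4, (S.filter fun c => c.2 = j).card ≤ 1) ∧
  (S.filter fun c => c.1 = 1).card ≤ 1 ∧
  (S.filter fun c => c.1 = 0).card ≤ 2

/-- `K` is the `1`-skeleton of the tetrahedron on `4` vertices. -/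
def IsTetraSkeleton (A : Finset (Fin 4)) : Prop := A.card ≤ 2

/-- The Alexander dual `K° = {A ⊆ [m] : [m] \ A ∉ K}` of the `1`-skeleton `K`. -/
def IsTetraSkeletonDual (B : Finset (Fin 4)) : Prop := ¬ IsTetraSkeleton Bᶜ

/-- The Bier sphere `Bier(K) = K *_Δ K°`, a simplicial complex on the disjoint union
of two copies of the vertex set: a simplex is a pair `(A, B)` of disjoint sets with
`A ∈ K` and `B ∈ K°`, encoded as a subset of `Fin 4 ⊕ Fin 4`. -/
def IsBierSimplex (T : Finset (Fin 4 ⊕ Fin 4)) : Prop :=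
  ∃ A B : Finset (Fin 4),
    T = A.image Sum.inl ∪ B.image Sum.inr ∧
    IsTetraSkeleton A ∧ IsTetraSkeletonDual B ∧ Disjoint A B

def chessEquiv : (Fin 2 × Fin 4) ≃ (Fin 4 ⊕ Fin 4) where
  toFun p := if p.1 = 0 then Sum.inl p.2 else Sum.inr p.2
  invFun x := Sum.elim (fun j => (0, j)) (fun j => (1, j)) x
  left_inv p := by
    obtain ⟨i, j⟩ := p
    fin_cases i <;> simp
  right_inv x := by rcases x with j | j <;> simp

open Finset in
/-- **Lemma 2.4** (`lema:small-Bier`, combinatorial part): the multiple chessboard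
complex `Δ_{2,4}^{𝟙;𝕃}` is isomorphic, as a simplicial complex, to the Bier sphere
`Bier(K)` of the `1`-skeleton `K` of the tetrahedron: there is a bijection of the
vertex sets carrying simplices exactly onto simplices. -/
theorem chessboard_iso_bier :
    ∃ e : (Fin 2 × Fin 4) ≃ (Fin 4 ⊕ Fin 4),
      ∀ S : Finset (Fin 2 × Fin 4),
        IsChessSimplex S ↔ IsBierSimplex (S.image e) := by
  refine ⟨chessEquiv, fun S => ?_⟩
  classical
  set A : Finset (Fin 4) := (S.filter fun c => c.1 = 0).image Prod.snd with hAdef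
  set B : Finset (Fin 4) := (S.filter fun c => c.1 = 1).image Prod.snd with hBdef
  have hmemA : ∀ j, j ∈ A ↔ (0, j) ∈ S := by
    intro j
    simp only [hAdef, mem_image, mem_filter]
    constructor
    · rintro ⟨⟨i, k⟩, ⟨hS, hi⟩, rfl⟩
      simp only at hi
      subst hi; exact hS
    · intro h; exact ⟨(0, j), ⟨h, rfl⟩, rfl⟩
  have hmemB : ∀ j, j ∈ B ↔ (1, j) ∈ S := by
    intro j
    simp only [hBdef, mem_image, mem_filter]
    constructor
    · rintro ⟨⟨i, k⟩, ⟨hS, hi⟩, rfl⟩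
      simp only at hi
      subst hi; exact hS
    · intro h; exact ⟨(1, j), ⟨h, rfl⟩, rfl⟩
  have hcardA : A.card = (S.filter fun c => c.1 = 0).card := by
    apply card_image_of_injOn
    intro a ha b hb hab
    simp only [coe_filter, Set.mem_setOf_eq] at ha hb
    exact Prod.ext (ha.2.trans hb.2.symm) hab
  have hcardB : B.card = (S.filter fun c => c.1 = 1).card := by
    apply card_image_of_injOn
    intro a ha b hb hab
    simp only [coe_filter, Set.mem_setOf_eq] at ha hb
    exact Prod.ext (ha.2.trans hb.2.symm) hab
  have hm : ∀ x, x ∈ S.image chessEquiv ↔ chessEquiv.symm x ∈ S := by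
    intro x
    simp [Finset.mem_image, Equiv.apply_eq_iff_eq_symm_apply]
  have hsymml : ∀ j : Fin 4, chessEquiv.symm (Sum.inl j) = (0, j) := fun j => rfl
  have hsymmr : ∀ j : Fin 4, chessEquiv.symm (Sum.inr j) = (1, j) := fun j => rfl
  have himg : S.image chessEquiv = A.image Sum.inl ∪ B.image Sum.inr := by
    ext x
    rcases x with j | j
    · rw [hm, hsymml, mem_union]
      simp [hmemA j]
    · rw [hm, hsymmr, mem_union]
      simp [hmemB j]
  constructor
  · rintro ⟨hrow, hc1, hc0⟩
    refine ⟨A, B, himg, ?_, ?_, ?_⟩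
    · have h : A.card ≤ 2 := by rw [hcardA]; exact hc0
      exact h
    · have hB1 : B.card ≤ 1 := hcardB ▸ hc1
      simp only [IsTetraSkeletonDual, IsTetraSkeleton, card_compl, Fintype.card_fin]
      omega
    · rw [Finset.disjoint_left]
      intro j hjA hjB
      have h0 : (0, j) ∈ S := (hmemA j).1 hjA
      have h1 : (1, j) ∈ S := (hmemB j).1 hjB
      have h2 : 1 < (S.filter fun c => c.2 = j).card := by
        rw [Finset.one_lt_card]
        exact ⟨(0, j), by simp [mem_filter, h0], (1, j), by simp [mem_filter, h1], by simp⟩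
      exact absurd (hrow j) (by omega)
  · rintro ⟨A', B', hT, hA', hB', hdisj⟩
    have key : A.image Sum.inl ∪ B.image Sum.inr = A'.image Sum.inl ∪ B'.image Sum.inr :=
      himg.symm.trans hT
    have hAA : A = A' := by
      ext j
      have h := Finset.ext_iff.1 key (Sum.inl j)
      simpa using h
    have hBB : B = B' := by
      ext j
      have h := Finset.ext_iff.1 key (Sum.inr j)
      simpa using h
    have hB1 : B.card ≤ 1 := by
      have h := hB'
      simp only [IsTetraSkeletonDual, IsTetraSkeleton, card_compl, Fintype.card_fin] at h
      rw [hBB]; omega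
    refine ⟨?_, ?_, ?_⟩
    · intro j
      rw [Finset.card_le_one]
      rintro ⟨a1, a2⟩ ha ⟨b1, b2⟩ hb
      simp only [mem_filter] at ha hb
      obtain ⟨haS, ha2⟩ := ha
      obtain ⟨hbS, hb2⟩ := hb
      subst ha2; subst hb2
      have hdisj' : Disjoint A B := hAA ▸ hBB ▸ hdisj
      fin_cases a1 <;> fin_cases b1
      · rfl
      · exact absurd ((hmemB b2).2 hbS) (Finset.disjoint_left.1 hdisj' ((hmemA b2).2 haS))
      · exact absurd ((hmemB b2).2 haS) (Finset.disjoint_left.1 hdisj' ((hmemA b2).2 hbS))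
      · rfl
    · rw [← hcardB]; exact hB1
    · have h : A.card ≤ 2 := by rw [hAA]; exact hA'
      rw [← hcardA]; exact h
end

section
/- For a simplicial complex K on vertex set [m] with K ≠ 2^[m] and ∅ ∈ K, every maximal simplex of the Bier sphere Bier(K) = K *_Δ K° has dimension m-2; consequently Bier(K) is a pure (m-2)-dimensional complex. -/
open scoped Classical

/-- **Purity of Bier spheres.** Let `K` be a simplicial complex on the vertex set
`[m]` (downward closed, containing `∅`) with `K ≠ 2^[m]`, and let
`K° = {B : [m] \ B ∉ K}` be its Alexander dual. Every maximal simplex `(A, B)` of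
the deleted join `Bier(K) = K *_Δ K°` satisfies `|A| + |B| = m - 1`, i.e. has
dimension `m - 2`; consequently `Bier(K)` is pure `(m-2)`-dimensional. -/
theorem bier_sphere_pure (m : ℕ) (K : Finset (Fin m) → Prop)
    (hdown : ∀ A B : Finset (Fin m), A ⊆ B → K B → K A)
    (hempty : K ∅)
    (hproper : ¬ K Finset.univ)
    (A B : Finset (Fin m))
    (hA : K A) (hB : ¬ K Bᶜ) (hAB : Disjoint A B)
    -- `(A, B)` is a maximal simplex of `Bier(K)`
    (hmax : ∀ A' B' : Finset (Fin m), K A' → ¬ K B'ᶜ → Disjoint A' B' →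
      A ⊆ A' → B ⊆ B' → A' = A ∧ B' = B) :
    A.card + B.card = m - 1 := by
  have hcard : (A ∪ B).card = A.card + B.card := Finset.card_union_of_disjoint hAB
  have hle : A.card + B.card ≤ m := by
    rw [← hcard]
    simpa using Finset.card_le_univ (A ∪ B)
  -- rule out equality with m
  have hne : A.card + B.card ≠ m := by
    intro h
    have huniv : A ∪ B = Finset.univ := by
      apply Finset.eq_univ_of_card
      simp [hcard, h]
    have hBc : Bᶜ = A := by
      apply Finset.Subset.antisymm
      · intro x hx
        have hx' : x ∈ A ∪ B := by rw [huniv]; exact Finset.mem_univ x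
        rcases Finset.mem_union.mp hx' with h1 | h1
        · exact h1
        · exact absurd h1 (Finset.mem_compl.mp hx)
      · intro x hx
        exact Finset.mem_compl.mpr (Finset.disjoint_left.mp hAB hx)
    exact hB (hBc ▸ hA)
  -- suppose A.card + B.card ≤ m - 2
  by_contra hcontra
  have hle2 : A.card + B.card + 2 ≤ m := by omega
  have hcompl : 2 ≤ (A ∪ B)ᶜ.card := by
    have := Finset.card_compl (A ∪ B)
    rw [hcard] at this
    simp only [Fintype.card_fin] at this
    omega
  obtain ⟨x, hx, y, hy, hxy⟩ := Finset.one_lt_card.mp hcompl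
  have hxA : x ∉ A := fun h => (Finset.mem_compl.mp hx) (Finset.mem_union_left _ h)
  have hxB : x ∉ B := fun h => (Finset.mem_compl.mp hx) (Finset.mem_union_right _ h)
  have hyA : y ∉ A := fun h => (Finset.mem_compl.mp hy) (Finset.mem_union_left _ h)
  have hyB : y ∉ B := fun h => (Finset.mem_compl.mp hy) (Finset.mem_union_right _ h)
  -- cannot enlarge A by y
  have hnKy : ¬ K (insert y A) := by
    intro hK
    have hdisj : Disjoint (insert y A) B := by
      rw [Finset.disjoint_left]
      intro a ha
      rcases Finset.mem_insert.mp ha with rfl | ha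
      · exact hyB
      · exact Finset.disjoint_left.mp hAB ha
    have := (hmax (insert y A) B hK hB hdisj (Finset.subset_insert _ _)
      (Finset.Subset.refl _)).1
    exact hyA (this ▸ Finset.mem_insert_self y A)
  -- cannot enlarge B by x, hence K ((insert x B)ᶜ)
  have hKx : K (insert x B)ᶜ := by
    by_contra hK
    have hdisj : Disjoint A (insert x B) := by
      rw [Finset.disjoint_right]
      intro a ha
      rcases Finset.mem_insert.mp ha with rfl | ha
      · exact hxA
      · exact fun h => Finset.disjoint_left.mp hAB h ha
    have := (hmax A (insert x B) hA hK hdisj (Finset.Subset.refl _)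
      (Finset.subset_insert _ _)).2
    exact hxB (this ▸ Finset.mem_insert_self x B)
  -- but insert y A ⊆ (insert x B)ᶜ
  apply hnKy
  apply hdown _ _ _ hKx
  intro a ha
  rw [Finset.mem_compl, Finset.mem_insert]
  rcases Finset.mem_insert.mp ha with rfl | ha
  · exact fun h => h.elim (fun h => hxy h.symm) hyB
  · exact fun h => h.elim (fun h => hxA (h ▸ ha)) (fun h => Finset.disjoint_left.mp hAB ha h)
end
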